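/- A proper, lsc, convex function g : ℝᵖ → ℝ ∪ {+∞} is m-strongly convex (m > 0) if and only if its Fenchel conjugate g* is differentiable on ℝᵖ with (1/m)-Lipschitz continuous gradient. -/

import Mathlib

/-!
If `g` is `m`-strongly convex, so is `g - ⟪·, y⟫` for every `y`; being lower semicontinuous and
coercive it attains its minimum at some `X y`, and `g* y = ⟪X y, y⟫ - g (X y)`. Then `X y` is a
subgradient of `g*` at `y`, and the quadratic growth of `g - ⟪·, y⟫` around `X y` makes `X`
strongly monotone: `m ‖X y - X z‖² ≤ ⟪X y - X z, y - z⟫`. So `X` is `1/m`-Lipschitz, and the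
subgradient inequality squeezes `g*` to first order, with gradient `X`.

Conversely, if `∇g*` is `1/m`-Lipschitz, the descent lemma at `w` together with Fenchel–Young at
`w + m (x - ∇g* w)` gives the minorants `⟪x, w⟫ - g* w + m/2 ‖x - ∇g* w‖²` of `g`. Each is
`m`-strongly convex in `x`, and by Fenchel–Moreau (separation from the closed convex epigraph)
`g` is their supremum, hence `m`-strongly convex.
-/

open scoped InnerProductSpace
noncomputable section

/-- A proper extended-real-valued function: never `⊥` and finite somewhere. -/
def ProperE {V : Type*} (f : V → EReal) : Prop := (∀ x, f x ≠ ⊥) ∧ ∃ x, f x ≠ ⊤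

/-- Convexity of an extended-real-valued function, via convexity of its epigraph. -/
def ConvexFnE {V : Type*} [AddCommGroup V] [Module ℝ V] (f : V → EReal) : Prop :=
  Convex ℝ {q : V × ℝ | f q.1 ≤ (q.2 : EReal)}

/-- `m`-strong convexity of an extended-real-valued function:
`g − (m/2)‖·‖²` is convex. -/
def StrongConvexE {V : Type*} [NormedAddCommGroup V] [NormedSpace ℝ V]
    (m : ℝ) (g : V → EReal) : Prop :=
  ConvexFnE (fun x => g x - ((m / 2 * ‖x‖ ^ 2 : ℝ) : EReal))

/-- Fenchel conjugate of an extended-real-valued function on an inner product space. -/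
def econj {V : Type*} [NormedAddCommGroup V] [InnerProductSpace ℝ V]
    (f : V → EReal) (y : V) : EReal :=
  ⨆ x, ((⟪x, y⟫_ℝ : ℝ) : EReal) - f x

open Filter Topology

variable {V : Type*} [NormedAddCommGroup V] [InnerProductSpace ℝ V] {m : ℝ} {g : V → EReal}

lemma EReal.sub_coe_le_coe_iff {x : EReal} {c r : ℝ} :
    x - (c : EReal) ≤ (r : EReal) ↔ x ≤ ((r + c : ℝ) : EReal) := by
  rw [EReal.sub_le_iff_le_add (.inl (EReal.coe_ne_bot c)) (.inl (EReal.coe_ne_top c)),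
    EReal.coe_add]

lemma norm_smul_add_smul_sq {a b : ℝ} (hab : a + b = 1) (x y : V) :
    ‖a • x + b • y‖ ^ 2 = a * ‖x‖ ^ 2 + b * ‖y‖ ^ 2 - a * b * ‖x - y‖ ^ 2 := by
  rw [norm_add_sq_real, norm_sub_sq_real, norm_smul, norm_smul, real_inner_smul_left,
    real_inner_smul_right, Real.norm_eq_abs, Real.norm_eq_abs, mul_pow, mul_pow, sq_abs, sq_abs]
  obtain rfl := eq_sub_of_add_eq hab
  ring

lemma convexFnE_iff {E : Type*} [AddCommGroup E] [Module ℝ E] {f : E → EReal} :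
    ConvexFnE f ↔ ∀ ⦃x y : E⦄ ⦃r s : ℝ⦄, f x ≤ r → f y ≤ s → ∀ ⦃a b : ℝ⦄, 0 ≤ a → 0 ≤ b →
      a + b = 1 → f (a • x + b • y) ≤ ((a * r + b * s : ℝ) : EReal) := by
  refine ⟨fun h x y r s hx hy a b ha hb hab => ?_, fun h ⟨x, r⟩ hx ⟨y, s⟩ hy a b ha hb hab => ?_⟩
  · simpa using h (show (x, r) ∈ {q : E × ℝ | f q.1 ≤ q.2} from hx)
      (show (y, s) ∈ {q : E × ℝ | f q.1 ≤ q.2} from hy) ha hb hab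
  · simpa using h hx hy ha hb hab

lemma strongConvexE_iff :
    StrongConvexE m g ↔ ∀ ⦃x y : V⦄ ⦃r s : ℝ⦄, g x ≤ r → g y ≤ s → ∀ ⦃a b : ℝ⦄, 0 ≤ a → 0 ≤ b →
      a + b = 1 →
        g (a • x + b • y) ≤ ((a * r + b * s - m / 2 * a * b * ‖x - y‖ ^ 2 : ℝ) : EReal) := by
  simp only [StrongConvexE, convexFnE_iff, EReal.sub_coe_le_coe_iff]
  refine ⟨fun h x y r s hx hy a b ha hb hab => ?_, fun h x y r s hx hy a b ha hb hab => ?_⟩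
  · have := h (x := x) (y := y) (r := r - m / 2 * ‖x‖ ^ 2) (s := s - m / 2 * ‖y‖ ^ 2)
      (by rwa [sub_add_cancel]) (by rwa [sub_add_cancel]) ha hb hab
    refine this.trans_eq ?_
    rw [norm_smul_add_smul_sq hab]
    ring_nf
  · refine (h hx hy ha hb hab).trans_eq ?_
    rw [norm_smul_add_smul_sq hab]
    ring_nf

lemma inner_sub_le_econj {x : V} {r : ℝ} (hx : g x ≤ r) (y : V) :
    ((⟪x, y⟫_ℝ - r : ℝ) : EReal) ≤ econj g y :=
  le_iSup_of_le x (by rw [EReal.coe_sub]; exact EReal.sub_le_sub le_rfl hx)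

lemma econj_le_coe_iff {y : V} {c : ℝ} :
    econj g y ≤ c ↔ ∀ x (r : ℝ), g x ≤ r → ⟪x, y⟫_ℝ - r ≤ c := by
  refine ⟨fun h x r hx => EReal.coe_le_coe_iff.1 ((inner_sub_le_econj hx y).trans h),
    fun h => iSup_le fun x => ?_⟩
  cases hgx : g x using EReal.rec with
  | bot => linarith [h x (⟪x, y⟫_ℝ - c - 1) (by simp [hgx])]
  | coe r => exact_mod_cast h x r hgx.le
  | top => simp

lemma LowerSemicontinuous.sub_coe {X : Type*} [TopologicalSpace X] {f : X → EReal}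
    (hf : LowerSemicontinuous f) {φ : X → ℝ} (hφ : Continuous φ) :
    LowerSemicontinuous fun x => f x - φ x := by
  simp only [sub_eq_add_neg, ← EReal.coe_neg]
  exact hf.add' (continuous_coe_real_ereal.comp hφ.neg).lowerSemicontinuous
    fun x => EReal.continuousAt_add (.inr (EReal.coe_ne_bot _)) (.inr (EReal.coe_ne_top _))

lemma ProperE.sub_coe {X : Type*} {f : X → EReal} (hf : ProperE f) (φ : X → ℝ) :
    ProperE fun x => f x - φ x := by
  obtain ⟨hbot, x, hx⟩ := hf
  refine ⟨fun z => ?_, x, ?_⟩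
  · show f z - φ z ≠ ⊥
    cases hfz : f z using EReal.rec with
    | bot => exact absurd hfz (hbot z)
    | coe r => exact EReal.coe_ne_bot (r - φ z)
    | top => simp
  · lift f x to ℝ using ⟨hx, hbot x⟩ with r
    exact EReal.coe_ne_top (r - φ x)

lemma StrongConvexE.sub_inner (hg : StrongConvexE m g) (y : V) :
    StrongConvexE m fun x => g x - ⟪x, y⟫_ℝ := by
  rw [strongConvexE_iff] at hg ⊢
  intro x z r s hx hz a b ha hb hab
  rw [EReal.sub_coe_le_coe_iff] at hx hz ⊢
  refine (hg hx hz ha hb hab).trans_eq ?_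
  rw [inner_add_left, real_inner_smul_left, real_inner_smul_left]
  ring_nf

open Metric in
lemma StrongConvexE.norm_sub_mul_le_sub (hsc : StrongConvexE m g) {x₀ x : V} {μ r₀ r : ℝ}
    (hμ : ∀ u ∈ closedBall x₀ 1, (μ : EReal) ≤ g u) (h₀ : g x₀ ≤ r₀) (hx : g x ≤ r)
    (hd : 1 ≤ ‖x - x₀‖) :
    ‖x - x₀‖ * (μ - r₀ + m / 2 * (‖x - x₀‖ - 1)) ≤ r - r₀ := by
  set d := ‖x - x₀‖
  set t := d⁻¹
  have htd : t * d = 1 := inv_mul_cancel₀ (by positivity)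
  have hu : (1 - t) • x₀ + t • x ∈ closedBall x₀ 1 := by
    rw [mem_closedBall, dist_eq_norm, show (1 - t) • x₀ + t • x - x₀ = t • (x - x₀) by module,
      norm_smul, Real.norm_of_nonneg (by positivity), htd]
  have hcombo := (strongConvexE_iff.1 hsc h₀ hx (sub_nonneg.2 (inv_le_one_of_one_le₀ hd))
    (by positivity) (sub_add_cancel 1 t))
  have hμ' := EReal.coe_le_coe_iff.1 ((hμ _ hu).trans hcombo)
  rw [norm_sub_rev] at hμ'
  linear_combination d * hμ' + ((r - r₀) - m / 2 * d * (d - 1 - t * d)) * htd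

open Metric in
lemma StrongConvexE.exists_forall_le [ProperSpace V] (hm : 0 < m) (hg : ProperE g)
    (hlsc : LowerSemicontinuous g) (hsc : StrongConvexE m g) :
    ∃ x, g x ≠ ⊤ ∧ ∀ z, g x ≤ g z := by
  obtain ⟨hbot, x₀, hx₀⟩ := hg
  lift g x₀ to ℝ using ⟨hx₀, hbot x₀⟩ with r₀ h₀
  obtain ⟨u, -, hu⟩ := (hlsc.lowerSemicontinuousOn _).exists_isMinOn
    ⟨x₀, mem_closedBall_self zero_le_one⟩ (isCompact_closedBall x₀ 1)
  set μ := (g u).toReal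
  have hμ : ∀ v ∈ closedBall x₀ 1, (μ : EReal) ≤ g v :=
    fun v hv => (EReal.coe_toReal_le (hbot u)).trans (hu hv)
  have hμr₀ : μ ≤ r₀ := by exact_mod_cast h₀ ▸ hμ x₀ (mem_closedBall_self zero_le_one)
  set R := 1 + 2 * (r₀ - μ) / m
  have hR : 1 ≤ R := le_add_of_nonneg_right (by have := sub_nonneg.2 hμr₀; positivity)
  have hfar : ∀ z ∉ closedBall x₀ R, (r₀ : EReal) ≤ g z := by
    intro z hz
    rw [mem_closedBall, dist_eq_norm, not_le] at hz
    refine EReal.le_of_forall_lt_iff_le.1 fun r hr => ?_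
    have key := hsc.norm_sub_mul_le_sub hμ h₀.ge hr.le (hR.trans hz.le)
    have : 0 ≤ μ - r₀ + m / 2 * (‖z - x₀‖ - 1) := by
      have : 2 * (r₀ - μ) / m ≤ ‖z - x₀‖ - 1 := by linarith
      rw [div_le_iff₀ hm] at this
      linarith
    exact_mod_cast sub_nonneg.1 (key.trans' (by positivity))
  obtain ⟨x, hx, hmin⟩ := (hlsc.lowerSemicontinuousOn _).exists_isMinOn
    ⟨x₀, mem_closedBall_self (by linarith)⟩ (isCompact_closedBall x₀ R)
  have hx₀ : g x ≤ r₀ := h₀ ▸ hmin (mem_closedBall_self (by linarith))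
  refine ⟨x, ne_top_of_le_ne_top (EReal.coe_ne_top r₀) hx₀, fun z => ?_⟩
  by_cases hz : z ∈ closedBall x₀ R
  · exact hmin hz
  · exact hx₀.trans (hfar z hz)

lemma StrongConvexE.add_sq_le_of_forall_le (hsc : StrongConvexE m g) {x₀ : V} {r₀ : ℝ}
    (h₀ : g x₀ = r₀) (hmin : ∀ z, g x₀ ≤ g z) {x : V} {r : ℝ} (hx : g x ≤ r) :
    r₀ + m / 2 * ‖x - x₀‖ ^ 2 ≤ r := by
  set D := ‖x - x₀‖
  have hnear : ∀ t ∈ Set.Ioo (0 : ℝ) 1, r₀ + m / 2 * (1 - t) * D ^ 2 ≤ r := by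
    rintro t ⟨ht₀, ht₁⟩
    have hcombo := strongConvexE_iff.1 hsc h₀.le hx (sub_nonneg.2 ht₁.le) ht₀.le
      (sub_add_cancel 1 t)
    have := EReal.coe_le_coe_iff.1 (h₀ ▸ (hmin _).trans hcombo)
    rw [norm_sub_rev] at this
    exact le_of_mul_le_mul_left (by linarith) ht₀
  have hlim : Tendsto (fun t => r₀ + m / 2 * (1 - t) * D ^ 2) (𝓝[>] 0)
      (𝓝 (r₀ + m / 2 * (1 - 0) * D ^ 2)) :=
    ((by fun_prop : Continuous fun t : ℝ => r₀ + m / 2 * (1 - t) * D ^ 2).tendsto 0).mono_left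
      nhdsWithin_le_nhds
  simpa using le_of_tendsto hlim (mem_of_superset (Ioo_mem_nhdsGT one_pos) hnear)

lemma StrongConvexE.exists_econj_eq [ProperSpace V] (hm : 0 < m) (hg : ProperE g)
    (hlsc : LowerSemicontinuous g) (hsc : StrongConvexE m g) (y : V) :
    ∃ x : V, ∃ c : ℝ, econj g y = c ∧ g x ≤ ((⟪x, y⟫_ℝ - c : ℝ) : EReal) ∧
      ∀ z (s : ℝ), g z ≤ s → ⟪z, y⟫_ℝ - s + m / 2 * ‖z - x‖ ^ 2 ≤ c := by
  obtain ⟨x, hx, hmin⟩ := (hsc.sub_inner y).exists_forall_le hm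
    (hg.sub_coe _) (hlsc.sub_coe (continuous_id.inner continuous_const))
  lift g x - ⟪x, y⟫_ℝ to ℝ using ⟨hx, (hg.sub_coe fun z => ⟪z, y⟫_ℝ).1 x⟩ with ρ hρ
  have hgrowth : ∀ z (s : ℝ), g z ≤ s → ⟪z, y⟫_ℝ - s + m / 2 * ‖z - x‖ ^ 2 ≤ -ρ := by
    intro z s hz
    have := (hsc.sub_inner y).add_sq_le_of_forall_le hρ.symm hmin
      (EReal.sub_coe_le_coe_iff.2 (by rwa [sub_add_cancel]) : g z - ⟪z, y⟫_ℝ ≤ (s - ⟪z, y⟫_ℝ : ℝ))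
    linarith
  have hx' : g x ≤ ((⟪x, y⟫_ℝ - -ρ : ℝ) : EReal) := by
    rw [sub_neg_eq_add, add_comm]
    exact EReal.sub_coe_le_coe_iff.1 hρ.ge
  refine ⟨x, -ρ, le_antisymm ?_ ?_, hx', hgrowth⟩
  · exact econj_le_coe_iff.2 fun z s hz => by
      linarith [hgrowth z s hz, (by positivity : 0 ≤ m / 2 * ‖z - x‖ ^ 2)]
  · simpa using inner_sub_le_econj hx' y

lemma norm_le_of_mul_sq_le_inner (hm : 0 < m) {a b : V} (h : m * ‖a‖ ^ 2 ≤ ⟪a, b⟫_ℝ) :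
    ‖a‖ ≤ 1 / m * ‖b‖ := by
  rw [one_div_mul_eq_div, le_div_iff₀' hm]
  rcases (norm_nonneg a).eq_or_lt with ha | ha
  · rw [← ha, mul_zero]; exact norm_nonneg b
  · nlinarith [real_inner_le_norm a b]

lemma hasFDerivAt_of_norm_sub_le_sq {E F : Type*} [NormedAddCommGroup E] [NormedSpace ℝ E]
    [NormedAddCommGroup F] [NormedSpace ℝ F] {f : E → F} {f' : E →L[ℝ] F} {x : E} {C : ℝ}
    (h : ∀ z, ‖f z - f x - f' (z - x)‖ ≤ C * ‖z - x‖ ^ 2) : HasFDerivAt f f' x := by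
  rw [hasFDerivAt_iff_isLittleO_nhds_zero]
  refine (Asymptotics.IsBigO.of_bound C (Eventually.of_forall fun v => ?_)).trans_isLittleO
    (Asymptotics.isLittleO_norm_pow_id one_lt_two)
  simpa using h (x + v)

lemma hasGradientAt_of_le_of_lipschitz [CompleteSpace V] {G : V → ℝ} {X : V → V} {L : ℝ}
    (hsub : ∀ y z, G y + ⟪X y, z - y⟫_ℝ ≤ G z) (hX : ∀ y z, ‖X y - X z‖ ≤ L * ‖y - z‖)
    (y : V) : HasGradientAt G (X y) y := by
  rw [hasGradientAt_iff_hasFDerivAt]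
  refine hasFDerivAt_of_norm_sub_le_sq (C := L) fun z => ?_
  rw [InnerProductSpace.toDual_apply_apply, Real.norm_of_nonneg (by linarith [hsub y z])]
  have h₁ := hsub z y
  rw [← neg_sub z y, inner_neg_right] at h₁
  calc G z - G y - ⟪X y, z - y⟫_ℝ ≤ ⟪X z - X y, z - y⟫_ℝ := by rw [inner_sub_left]; linarith
    _ ≤ ‖X z - X y‖ * ‖z - y‖ := real_inner_le_norm _ _
    _ ≤ L * ‖z - y‖ * ‖z - y‖ := by gcongr; exact hX z y
    _ = L * ‖z - y‖ ^ 2 := by ring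

theorem StrongConvexE.exists_econj_eq_lipschitz_gradient [ProperSpace V] (hm : 0 < m)
    (hg : ProperE g) (hlsc : LowerSemicontinuous g) (hsc : StrongConvexE m g) :
    ∃ G : V → ℝ, (∀ y, econj g y = G y) ∧ Differentiable ℝ G ∧
      ∀ y z, ‖gradient G y - gradient G z‖ ≤ 1 / m * ‖y - z‖ := by
  choose X G hG hX hgrowth using hsc.exists_econj_eq hm hg hlsc
  have hsub : ∀ y z, G y + ⟪X y, z - y⟫_ℝ ≤ G z := fun y z => by
    have := inner_sub_le_econj (hX y) z
    rw [hG z, EReal.coe_le_coe_iff] at this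
    rw [inner_sub_right]
    linarith
  have hmono : ∀ y z, m * ‖X y - X z‖ ^ 2 ≤ ⟪X y - X z, y - z⟫_ℝ := fun y z => by
    have h₁ := hgrowth y (X z) _ (hX z)
    have h₂ := hgrowth z (X y) _ (hX y)
    rw [norm_sub_rev (X y)] at h₂ ⊢
    simp only [inner_sub_left, inner_sub_right]
    linarith
  have hlip y z : ‖X y - X z‖ ≤ 1 / m * ‖y - z‖ := norm_le_of_mul_sq_le_inner hm (hmono y z)
  have hgrad := hasGradientAt_of_le_of_lipschitz hsub hlip
  refine ⟨G, hG, fun y => (hgrad y).differentiableAt, fun y z => ?_⟩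
  rw [(hgrad y).gradient, (hgrad z).gradient]
  exact hlip y z

lemma le_add_inner_gradient_add_sq [CompleteSpace V] {G : V → ℝ} {L : ℝ}
    (hG : Differentiable ℝ G) (hlip : ∀ y z, ‖gradient G y - gradient G z‖ ≤ L * ‖y - z‖)
    (y v : V) : G (y + v) ≤ G y + ⟪gradient G y, v⟫_ℝ + L / 2 * ‖v‖ ^ 2 := by
  have hline : ∀ t : ℝ, HasDerivAt (fun t : ℝ => G (y + t • v) - t * ⟪gradient G y, v⟫_ℝ)
      (⟪gradient G (y + t • v), v⟫_ℝ - ⟪gradient G y, v⟫_ℝ) t := by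
    intro t
    have hpath : HasDerivAt (fun t : ℝ => y + t • v) v t := by
      simpa using ((hasDerivAt_id t).smul_const v).const_add y
    have := (hG (y + t • v)).hasFDerivAt.comp_hasDerivAt t hpath
    rw [← inner_gradient_left] at this
    exact this.sub (hasDerivAt_mul_const _)
  have hbound : ∀ t : ℝ, HasDerivAt (fun t : ℝ => G y + L / 2 * ‖v‖ ^ 2 * t ^ 2)
      (L * ‖v‖ ^ 2 * t) t := fun t => by
    refine (((hasDerivAt_pow 2 t).const_mul (L / 2 * ‖v‖ ^ 2)).const_add (G y)).congr_deriv ?_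
    push_cast
    ring
  have hslope : ∀ t ∈ Set.Ico (0 : ℝ) 1,
      ⟪gradient G (y + t • v), v⟫_ℝ - ⟪gradient G y, v⟫_ℝ ≤ L * ‖v‖ ^ 2 * t := by
    rintro t ⟨ht, -⟩
    calc ⟪gradient G (y + t • v), v⟫_ℝ - ⟪gradient G y, v⟫_ℝ
        = ⟪gradient G (y + t • v) - gradient G y, v⟫_ℝ := (inner_sub_left ..).symm
      _ ≤ ‖gradient G (y + t • v) - gradient G y‖ * ‖v‖ := real_inner_le_norm _ _
      _ ≤ L * ‖t • v‖ * ‖v‖ := by gcongr; simpa using hlip (y + t • v) y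
      _ = L * ‖v‖ ^ 2 * t := by rw [norm_smul, Real.norm_of_nonneg ht]; ring
  have := image_le_of_deriv_right_le_deriv_boundary
    (fun t _ => (hline t).continuousAt.continuousWithinAt)
    (fun t _ => (hline t).hasDerivWithinAt) (by simp)
    (fun t _ => (hbound t).continuousAt.continuousWithinAt)
    (fun t _ => (hbound t).hasDerivWithinAt) hslope (Set.right_mem_Icc.2 zero_le_one)
  simp only [one_smul, one_mul, one_pow, mul_one] at this
  linarith

lemma add_sq_le_of_econj_eq [CompleteSpace V] (hm : 0 < m) {G : V → ℝ}
    (hG : ∀ y, econj g y = G y) (hdiff : Differentiable ℝ G)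
    (hlip : ∀ y z, ‖gradient G y - gradient G z‖ ≤ 1 / m * ‖y - z‖) {x : V} {r : ℝ}
    (hx : g x ≤ r) (w : V) :
    ⟪x, w⟫_ℝ - G w + m / 2 * ‖x - gradient G w‖ ^ 2 ≤ r := by
  set d := x - gradient G w
  -- `w + m • d` maximises the lower bound on `g x` given by Fenchel–Young and the descent lemma
  have hFY := inner_sub_le_econj hx (w + m • d)
  rw [hG, EReal.coe_le_coe_iff] at hFY
  have hdescent := le_add_inner_gradient_add_sq hdiff hlip w (m • d)
  have hd : ⟪x, d⟫_ℝ - ⟪gradient G w, d⟫_ℝ = ‖d‖ ^ 2 := by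
    rw [← inner_sub_left, real_inner_self_eq_norm_sq]
  rw [inner_add_right, real_inner_smul_right] at hFY
  rw [real_inner_smul_right, norm_smul, Real.norm_of_nonneg hm.le] at hdescent
  have hq : 1 / m / 2 * (m * ‖d‖) ^ 2 = m / 2 * ‖d‖ ^ 2 := by field_simp
  rw [hq] at hdescent
  linear_combination hFY + hdescent - m * hd

lemma exists_lt_inner_sub_of_separation {G : V → ℝ} (hG : ∀ y, econj g y = G y) {y : V}
    {c u r : ℝ} (hc : 0 ≤ c)
    (hsep : ∀ x (s : ℝ), g x ≤ s → u < ⟪y, x⟫_ℝ + c * s) {x₀ : V}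
    (hx₀ : ⟪y, x₀⟫_ℝ + c * r < u) : ∃ w, r < ⟪x₀, w⟫_ℝ - G w := by
  have hval : ∀ l : ℝ, 0 ≤ l → l * c ≤ 1 →
      l * (u - ⟪y, x₀⟫_ℝ) - (1 - l * c) * G 0 ≤ ⟪x₀, -l • y⟫_ℝ - G (-l • y) := by
    intro l hl hlc
    suffices G (-l • y) ≤ (1 - l * c) * G 0 - l * u by
      rw [inner_smul_right, real_inner_comm]
      linarith
    rw [← EReal.coe_le_coe_iff, ← hG]
    refine econj_le_coe_iff.2 fun x s hx => ?_
    have h₀ := inner_sub_le_econj hx 0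
    rw [hG, EReal.coe_le_coe_iff, inner_zero_right, zero_sub] at h₀
    have h₁ := mul_le_mul_of_nonneg_left (hsep x s hx).le hl
    have h₂ := mul_le_mul_of_nonneg_left h₀ (sub_nonneg.2 hlc)
    rw [inner_smul_right, real_inner_comm]
    linarith
  rcases hc.lt_or_eq with hc | rfl
  · refine ⟨-c⁻¹ • y, lt_of_lt_of_le ?_ (hval c⁻¹ (by positivity) (inv_mul_cancel₀ hc.ne').le)⟩
    rw [inv_mul_cancel₀ hc.ne', sub_self, zero_mul, sub_zero, ← div_eq_inv_mul, lt_div_iff₀ hc]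
    linarith
  · -- a vertical separating hyperplane: move `w` far out along `-y`
    have hpos : 0 < u - ⟪y, x₀⟫_ℝ := by linarith
    set l := (|r + G 0| + 1) / (u - ⟪y, x₀⟫_ℝ)
    refine ⟨-l • y, lt_of_lt_of_le ?_ (hval l (by positivity) (by simp))⟩
    rw [div_mul_cancel₀ _ hpos.ne']
    linarith [le_abs_self (r + G 0)]

lemma ProperE.exists_lt_inner_sub_of_econj_eq [CompleteSpace V] (hg : ProperE g)
    (hlsc : LowerSemicontinuous g) (hconv : ConvexFnE g) {G : V → ℝ}
    (hG : ∀ y, econj g y = G y) {x₀ : V} {r : ℝ} (hr : r < g x₀) :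
    ∃ w, r < ⟪x₀, w⟫_ℝ - G w := by
  have hclosed : IsClosed {q : V × ℝ | g q.1 ≤ q.2} :=
    (lowerSemicontinuous_iff_isClosed_epigraph.1 hlsc).preimage
      (continuous_fst.prodMk (continuous_coe_real_ereal.comp continuous_snd))
  obtain ⟨f, u, hf₀, hf⟩ := geometric_hahn_banach_point_closed hconv hclosed
    (show (x₀, r) ∉ {q : V × ℝ | g q.1 ≤ q.2} from hr.not_ge)
  set y := (InnerProductSpace.toDual ℝ V).symm (f.comp (ContinuousLinearMap.inl ℝ V ℝ))
  set c := f (0, 1)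
  have hf_apply : ∀ x s, f (x, s) = ⟪y, x⟫_ℝ + c * s := by
    intro x s
    have hxs : (x, s) = ContinuousLinearMap.inl ℝ V ℝ x + s • ((0 : V), (1 : ℝ)) := by simp
    rw [hxs, map_add, map_smul, smul_eq_mul, mul_comm, InnerProductSpace.toDual_symm_apply]
    rfl
  have hsep : ∀ x (s : ℝ), g x ≤ s → u < ⟪y, x⟫_ℝ + c * s := fun x s hx => by
    simpa [hf_apply] using hf (x, s) hx
  obtain ⟨hbot, x₁, hx₁⟩ := hg
  lift g x₁ to ℝ using ⟨hx₁, hbot x₁⟩ with s₁ hs₁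
  have hc : 0 ≤ c := by
    by_contra! hc
    set A := ⟪y, x₁⟫_ℝ + c * s₁ - u
    have := hsep x₁ (s₁ + |A| / -c) (by
      rw [← hs₁]; exact_mod_cast le_add_of_nonneg_right (div_nonneg (abs_nonneg A) (by linarith)))
    have hcA : c * (|A| / -c) = -|A| := by field_simp [hc.ne]
    rw [mul_add, hcA] at this
    linarith [le_abs_self A]
  exact exists_lt_inner_sub_of_separation hG hc hsep (by simpa [hf_apply] using hf₀)

theorem strongConvexE_of_econj_eq [CompleteSpace V] (hm : 0 < m) (hg : ProperE g)
    (hlsc : LowerSemicontinuous g) (hconv : ConvexFnE g) {G : V → ℝ}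
    (hG : ∀ y, econj g y = G y) (hdiff : Differentiable ℝ G)
    (hlip : ∀ y z, ‖gradient G y - gradient G z‖ ≤ 1 / m * ‖y - z‖) :
    StrongConvexE m g := by
  rw [strongConvexE_iff]
  intro x z r s hx hz a b ha hb hab
  refine EReal.ge_of_forall_gt_iff_ge.1 fun ρ hρ => ?_
  obtain ⟨w, hw⟩ := hg.exists_lt_inner_sub_of_econj_eq hlsc hconv hG hρ
  have hx' := mul_le_mul_of_nonneg_left (add_sq_le_of_econj_eq hm hG hdiff hlip hx w) ha
  have hz' := mul_le_mul_of_nonneg_left (add_sq_le_of_econj_eq hm hG hdiff hlip hz w) hb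
  set ξ := gradient G w
  have hsq := norm_smul_add_smul_sq hab (x - ξ) (z - ξ)
  rw [show a • (x - ξ) + b • (z - ξ) = a • x + b • z - ξ by
    rw [smul_sub, smul_sub, sub_add_sub_comm, ← add_smul, hab, one_smul],
    sub_sub_sub_cancel_right] at hsq
  rw [inner_add_left, real_inner_smul_left, real_inner_smul_left] at hw
  have : 0 ≤ m / 2 * ‖a • x + b • z - ξ‖ ^ 2 := by positivity
  exact_mod_cast (by linear_combination hw + hx' + hz' + this + m / 2 * hsq + G w * hab :
    ρ ≤ a * r + b * s - m / 2 * a * b * ‖x - z‖ ^ 2)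

/-- A proper lsc convex `g` is `m`-strongly convex iff `g*` is (finite-valued and)
differentiable on all of `ℝᵖ` with `(1/m)`-Lipschitz gradient. -/
theorem strong_convexity_iff_conjugate_lipschitz_gradient (p : ℕ) (m : ℝ) (hm : 0 < m)
    (g : EuclideanSpace ℝ (Fin p) → EReal)
    (hproper : ProperE g) (hlsc : LowerSemicontinuous g) (hconv : ConvexFnE g) :
    StrongConvexE m g ↔
      ∃ G : EuclideanSpace ℝ (Fin p) → ℝ,
        (∀ y, econj g y = ((G y : ℝ) : EReal)) ∧
        Differentiable ℝ G ∧
        ∀ y z, ‖gradient G y - gradient G z‖ ≤ (1 / m) * ‖y - z‖ :=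
  ⟨fun hsc => hsc.exists_econj_eq_lipschitz_gradient hm hproper hlsc,
    fun ⟨_, hG, hdiff, hlip⟩ => strongConvexE_of_econj_eq hm hproper hlsc hconv hG hdiff hlip⟩
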